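/- arXiv:1406.5557 — 2 statements merged into one kernel-verified Lean document; each statement's English description precedes it below -/
import Mathlib

section
/- For every n ≥ 1 and every k with 0 ≤ k ≤ 2^{n-1}−1, one has σ̂_n(2k) + σ̂_n(2k+1) = 2^n − 1, and σ̂_n(2k) is even. -/
/-- The Sierpinski gasket pattern: `g n m` is `g_m^{(n)} ∈ {0,1}` for `1 ≤ m ≤ n`,
defined by `g_1^{(n)} = g_n^{(n)} = 1` and
`g_m^{(n)} = g_{m-1}^{(n-1)} + g_m^{(n-1)} mod 2` for `2 ≤ m ≤ n−1`. -/
def g : ℕ → ℕ → ℕ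
  | 0, _ => 0
  | n + 1, m =>
    if m = 1 ∨ m = n + 1 then 1
    else if 2 ≤ m ∧ m ≤ n then (g n (m - 1) + g n m) % 2
    else 0

/-- The doubling operators `T_0` and `T_1` on binary tuples. -/
def Tmap (α : ℕ) (s : List ℕ) : List ℕ :=
  if α = 0 then s ++ s else s ++ s.map (fun x => 1 - x)

/-- The binary tuple `ν⁽ⁿ⁾ = (T_{g_1^{(n)}} ∘ T_{g_2^{(n)}} ∘ ⋯ ∘ T_{g_{n-1}^{(n)}})(0)`,
of length `2^{n-1}`. -/
def nuList (n : ℕ) : List ℕ :=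
  (List.range (n - 1)).foldr (fun i acc => Tmap (g n (i + 1)) acc) [0]

/-- The entry `ν_m^{(n)}`. -/
def nu (n m : ℕ) : ℕ := (nuList n).getD m 0

/-- The map `σ̂_n` on `I_n = {0, …, 2ⁿ−1}`: `σ̂_1 = id` and
`σ̂_n(j) = σ̂_{n-1}(j mod 2^{n-1}) + 2^{n-1}·c_j` where `c_{2m} = 1 − ν_m^{(n)}` and
`c_{2m+1} = ν_m^{(n)}`. -/
def sigmaHat : ℕ → ℕ → ℕ
  | 0, j => j
  | 1, j => j
  | n + 2, j =>
    sigmaHat (n + 1) (j % 2 ^ (n + 1)) +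
      2 ^ (n + 1) * (if j % 2 = 0 then 1 - nu (n + 2) (j / 2) else nu (n + 2) (j / 2))

/-! Since `2k mod 2ⁿ = 2 (k mod 2ⁿ⁻¹)` and `(2k+1) mod 2ⁿ = 2 (k mod 2ⁿ⁻¹) + 1`, the recursion
for `σ̂ₙ` sends the pair `(2k, 2k+1)` to the pair `(2r, 2r+1)`, `r = k mod 2ⁿ⁻¹`, one level
down, adding the top bits `2ⁿ⁻¹(1 - ν)` and `2ⁿ⁻¹ν`. As `ν ∈ {0, 1}` these add up to `2ⁿ⁻¹`,
and the first one is even. -/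

theorem Tmap_le_one (α : ℕ) {l : List ℕ} (h : ∀ x ∈ l, x ≤ 1) : ∀ x ∈ Tmap α l, x ≤ 1 := by
  unfold Tmap
  split_ifs
  · simpa [or_imp, forall_and] using h
  · simp only [List.mem_append, List.mem_map, or_imp, forall_and, forall_exists_index, and_imp]
    exact ⟨h, fun _ _ _ hx => hx ▸ Nat.sub_le 1 _⟩

theorem nuList_le_one (n : ℕ) : ∀ x ∈ nuList n, x ≤ 1 := by
  unfold nuList
  induction List.range (n - 1) with
  | nil => simp
  | cons i L ih => exact Tmap_le_one _ ih

theorem nu_le_one (n m : ℕ) : nu n m ≤ 1 := by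
  unfold nu
  by_cases hm : m < (nuList n).length
  · rw [List.getD_eq_getElem _ _ hm]
    exact nuList_le_one n _ (List.getElem_mem hm)
  · rw [List.getD_eq_default _ _ (not_lt.1 hm)]
    exact zero_le_one

theorem sigmaHat_add_two_two_mul (n k : ℕ) :
    sigmaHat (n + 2) (2 * k) =
      sigmaHat (n + 1) (2 * (k % 2 ^ n)) + 2 ^ (n + 1) * (1 - nu (n + 2) k) := by
  rw [sigmaHat, pow_succ', Nat.mul_mod_mul_left]
  simp

theorem sigmaHat_add_two_two_mul_add_one (n k : ℕ) :
    sigmaHat (n + 2) (2 * k + 1) =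
      sigmaHat (n + 1) (2 * (k % 2 ^ n) + 1) + 2 ^ (n + 1) * nu (n + 2) k := by
  have hdiv : (2 * k + 1) / 2 = k := by omega
  rw [sigmaHat, pow_succ', Nat.mod_mul, hdiv]
  simp [add_comm]

theorem two_dvd_sigmaHat_two_mul : ∀ n k : ℕ, 2 ∣ sigmaHat n (2 * k)
  | 0, k | 1, k => by simp [sigmaHat]
  | n + 2, k => by
    rw [sigmaHat_add_two_two_mul]
    exact dvd_add (two_dvd_sigmaHat_two_mul (n + 1) _)
      (Dvd.dvd.mul_right (dvd_pow_self 2 n.succ_ne_zero) _)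

theorem sigmaHat_two_mul_add_sigmaHat_two_mul_add_one :
    ∀ n k : ℕ, k < 2 ^ n →
      sigmaHat (n + 1) (2 * k) + sigmaHat (n + 1) (2 * k + 1) = 2 ^ (n + 1) - 1
  | 0, k, hk => by
    obtain rfl : k = 0 := by simpa using hk
    simp [sigmaHat]
  | n + 1, k, _ => by
    have ih := sigmaHat_two_mul_add_sigmaHat_two_mul_add_one n (k % 2 ^ n)
      (Nat.mod_lt _ (by positivity))
    have hnu : 2 ^ (n + 1) * (1 - nu (n + 2) k) + 2 ^ (n + 1) * nu (n + 2) k = 2 ^ (n + 1) := by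
      rw [← mul_add, Nat.sub_add_cancel (nu_le_one _ _), mul_one]
    rw [sigmaHat_add_two_two_mul, sigmaHat_add_two_two_mul_add_one]
    have hpos : 1 ≤ 2 ^ (n + 1) := Nat.one_le_two_pow
    rw [pow_succ 2 (n + 1)]
    omega

/-- For every `n ≥ 1` and `0 ≤ k ≤ 2^{n-1} − 1`,
`σ̂ₙ(2k) + σ̂ₙ(2k+1) = 2ⁿ − 1` and `σ̂ₙ(2k)` is even. -/
theorem sigmaHat_pairing (n k : ℕ) (hn : 1 ≤ n) (hk : k ≤ 2 ^ (n - 1) - 1) :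
    sigmaHat n (2 * k) + sigmaHat n (2 * k + 1) = 2 ^ n - 1 ∧ 2 ∣ sigmaHat n (2 * k) := by
  obtain ⟨n, rfl⟩ := Nat.exists_eq_add_of_le' hn
  have hk' : k < 2 ^ n := by
    have hpos : 1 ≤ 2 ^ n := Nat.one_le_two_pow
    rw [Nat.add_sub_cancel] at hk
    omega
  exact ⟨sigmaHat_two_mul_add_sigmaHat_two_mul_add_one n k hk', two_dvd_sigmaHat_two_mul _ k⟩
end

section
/- For every n ≥ 2 and every k with 0 ≤ k ≤ 2^{n-1}−1, writing k = (k_1,…,k_{n-1})_2 for its binary expansion, one has ν_k^{(n)} = Σ_{j=1}^{n-1} k_j g_j^{(n)} mod 2. -/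
def foldTmap (b : ℕ → ℕ) (L : ℕ) : List ℕ :=
  (List.range L).foldr (fun i acc => Tmap (b i) acc) [0]

lemma foldTmap_succ (b : ℕ → ℕ) (L : ℕ) :
    foldTmap b (L + 1) = Tmap (b 0) (foldTmap (fun i => b (i + 1)) L) := by
  rw [foldTmap, List.range_succ_eq_map, List.foldr_cons, List.foldr_map]
  rfl

lemma length_Tmap (a : ℕ) (s : List ℕ) : (Tmap a s).length = 2 * s.length := by
  unfold Tmap; split <;> simp <;> omega

lemma length_foldTmap (b : ℕ → ℕ) (L : ℕ) : (foldTmap b L).length = 2 ^ L := by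
  induction L generalizing b with
  | zero => rfl
  | succ L ih => rw [foldTmap_succ, length_Tmap, ih, pow_succ']

lemma le_one_of_mem_Tmap {a : ℕ} {s : List ℕ} (hs : ∀ x ∈ s, x ≤ 1) :
    ∀ x ∈ Tmap a s, x ≤ 1 := by
  unfold Tmap; split <;> simp only [List.mem_append, List.mem_map] <;> grind

lemma le_one_of_mem_foldTmap (b : ℕ → ℕ) (L : ℕ) : ∀ x ∈ foldTmap b L, x ≤ 1 := by
  induction L generalizing b with
  | zero => simp [foldTmap]
  | succ L ih => rw [foldTmap_succ]; exact le_one_of_mem_Tmap (ih _)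

lemma getD_Tmap {a q r : ℕ} {s : List ℕ} (ha : a ≤ 1) (hs : ∀ x ∈ s, x ≤ 1) (hq : q ≤ 1)
    (hr : r < s.length) :
    (Tmap a s).getD (q * s.length + r) 0 = (q * a + s.getD r 0) % 2 := by
  have hx := hs _ (List.getElem_mem hr)
  interval_cases q
  · unfold Tmap
    split <;> rw [zero_mul, zero_add, List.getD_append _ _ _ _ hr, List.getD_eq_getElem _ _ hr] <;>
      omega
  · unfold Tmap
    split <;> rw [one_mul, List.getD_append_right _ _ _ _ (by omega), Nat.add_sub_cancel_left] <;>
      simp [hr] <;> omega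

lemma mod_two_pow_div_two_pow_mod_two {k L i : ℕ} (h : i < L) :
    k % 2 ^ L / 2 ^ i % 2 = k / 2 ^ i % 2 := by
  rw [← Nat.add_sub_of_le h.le, pow_add, Nat.mod_mul_right_div_self]
  exact Nat.mod_mod_of_dvd _ (dvd_pow_self 2 (by omega))

lemma getD_foldTmap {b : ℕ → ℕ} {L k : ℕ} (hb : ∀ i < L, b i ≤ 1) (hk : k < 2 ^ L) :
    (foldTmap b L).getD k 0 = (∑ j ∈ Finset.range L, (k / 2 ^ (L - 1 - j) % 2) * b j) % 2 := by
  induction L generalizing b k with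
  | zero => simp_all [foldTmap]
  | succ L ih =>
    set q := k / 2 ^ L
    set r := k % 2 ^ L
    have hq : q ≤ 1 := by
      have : q < 2 := Nat.div_lt_of_lt_mul (hk.trans_eq (pow_succ 2 L)); omega
    have hr : r < (foldTmap (fun i => b (i + 1)) L).length :=
      (Nat.mod_lt _ (by positivity)).trans_eq (length_foldTmap _ L).symm
    have hhead := getD_Tmap (hb 0 L.succ_pos) (le_one_of_mem_foldTmap _ L) hq hr
    rw [length_foldTmap] at hhead hr
    have htail := ih (b := fun i => b (i + 1)) (fun i hi => hb _ (by omega)) hr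
    have hdigits : ∀ j ∈ Finset.range L,
        k / 2 ^ (L + 1 - 1 - (j + 1)) % 2 * b (j + 1) = r / 2 ^ (L - 1 - j) % 2 * b (j + 1) := by
      intro j hj
      rw [Finset.mem_range] at hj
      rw [mod_two_pow_div_two_pow_mod_two (by omega : L - 1 - j < L)]
      congr 4
      omega
    calc (foldTmap b (L + 1)).getD k 0
        = (q * b 0 + (foldTmap (fun i => b (i + 1)) L).getD r 0) % 2 := by
          rw [foldTmap_succ, ← hhead, Nat.div_add_mod']
      _ = (q * b 0 + ∑ j ∈ Finset.range L, r / 2 ^ (L - 1 - j) % 2 * b (j + 1)) % 2 := by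
          rw [htail, Nat.add_mod_mod]
      _ = _ := by
          rw [Finset.sum_range_succ', Finset.sum_congr rfl hdigits, Nat.sub_zero, Nat.add_sub_cancel,
            Nat.mod_eq_of_lt (by omega : q < 2), add_comm]

lemma g_le_one (n m : ℕ) : g n m ≤ 1 := by
  cases n with
  | zero => exact Nat.zero_le 1
  | succ n => rw [g]; split_ifs <;> omega

theorem nu_eq_sum_digits_mul_g_general (n k : ℕ) (hk : k < 2 ^ (n - 1)) :
    nu n k = (∑ j ∈ Finset.Icc 1 (n - 1), (k / 2 ^ (n - 1 - j) % 2) * g n j) % 2 := by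
  have hnu : nu n k = (foldTmap (fun i => g n (i + 1)) (n - 1)).getD k 0 := rfl
  rw [hnu, getD_foldTmap (fun i _ => g_le_one n (i + 1)) hk, ← Finset.Ico_add_one_right_eq_Icc,
    Finset.sum_Ico_eq_sum_range, Nat.add_sub_cancel]
  refine congrArg (· % 2) (Finset.sum_congr rfl fun j _ => ?_)
  rw [Nat.sub_sub, add_comm j 1]

/-- For every `n ≥ 2` and `k < 2^{n-1}`, writing
`k = (k_1, …, k_{n-1})₂` for the binary expansion `k_j = ⌊k / 2^{n-1-j}⌋ mod 2`, one has
`ν_k⁽ⁿ⁾ = Σ_{j=1}^{n-1} k_j g_j⁽ⁿ⁾ mod 2`. -/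
theorem nu_eq_sum_digits_mul_g (n k : ℕ) (hn : 2 ≤ n) (hk : k < 2 ^ (n - 1)) :
    nu n k = (∑ j ∈ Finset.Icc 1 (n - 1), (k / 2 ^ (n - 1 - j) % 2) * g n j) % 2 :=
  nu_eq_sum_digits_mul_g_general n k hk
end
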